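/- Let T = (c₁,0,c₃,c₄,0,0,f₁,f₂,f₃,f₄,t₁,t₂) and T′ = (c₁,0,c₃,c₄,0,0,f₁′,f₂′,f₃′,f₄′,t₁′,t₂′) be tuples in ℤ¹² with the same values c₁, c₃, c₄, all nonzero, and with gcd(c₁,c₃) = 1 and gcd(c₃,c₄) = 1. Then T and T′ are ψ-equivalent if and only if: f₁ ≡ f₁′ (mod c₁); f₂ ≡ f₂′ (mod c₄); c₃t₂ + f₃f₄ ≡ c₃t₂′ + f₃′f₄′ (mod gcd(c₁,c₄,c₃f₁,c₃f₂)); and c₁c₄t₁ + c₄f₁f₄ + c₁f₂f₃ ≡ c₁c₄t₁′ + c₄f₁′f₄′ + c₁f₂′f₃′ (mod c₃). -/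

import Mathlib

/-- A 12-tuple of integers, with coordinates written `(c₁,…,c₆,f₁,…,f₄,t₁,t₂)`. -/
structure Tuple : Type where
  c1 : ℤ
  c2 : ℤ
  c3 : ℤ
  c4 : ℤ
  c5 : ℤ
  c6 : ℤ
  f1 : ℤ
  f2 : ℤ
  f3 : ℤ
  f4 : ℤ
  t1 : ℤ
  t2 : ℤ

/-- The move ψ₂₁ : f₃↦f₃+c₅, f₄↦f₄−c₁, t₁↦t₁+f₁. -/
def psi21 : Equiv.Perm Tuple where
  toFun x := { x with f3 := x.f3 + x.c5, f4 := x.f4 - x.c1, t1 := x.t1 + x.f1 }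
  invFun x := { x with f3 := x.f3 - x.c5, f4 := x.f4 + x.c1, t1 := x.t1 - x.f1 }
  left_inv x := by cases x; simp
  right_inv x := by cases x; simp

/-- The move ψ₄₁ : f₂↦f₂+c₆, f₃↦f₃−c₅, t₂↦t₂−f₁. -/
def psi41 : Equiv.Perm Tuple where
  toFun x := { x with f2 := x.f2 + x.c6, f3 := x.f3 - x.c5, t2 := x.t2 - x.f1 }
  invFun x := { x with f2 := x.f2 - x.c6, f3 := x.f3 + x.c5, t2 := x.t2 + x.f1 }
  left_inv x := by cases x; simp
  right_inv x := by cases x; simp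

/-- The move ψ₁₂ : f₃↦f₃−c₄, f₄↦f₄+c₂, t₁↦t₁+f₂. -/
def psi12 : Equiv.Perm Tuple where
  toFun x := { x with f3 := x.f3 - x.c4, f4 := x.f4 + x.c2, t1 := x.t1 + x.f2 }
  invFun x := { x with f3 := x.f3 + x.c4, f4 := x.f4 - x.c2, t1 := x.t1 - x.f2 }
  left_inv x := by cases x; simp
  right_inv x := by cases x; simp

/-- The move ψ₃₂ : f₁↦f₁+c₆, f₄↦f₄−c₂, t₂↦t₂−f₂. -/
def psi32 : Equiv.Perm Tuple where
  toFun x := { x with f1 := x.f1 + x.c6, f4 := x.f4 - x.c2, t2 := x.t2 - x.f2 }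
  invFun x := { x with f1 := x.f1 - x.c6, f4 := x.f4 + x.c2, t2 := x.t2 + x.f2 }
  left_inv x := by cases x; simp
  right_inv x := by cases x; simp

/-- The move ψ₄₃ : f₁↦f₁+c₅, f₂↦f₂−c₄, t₁↦t₁+f₃. -/
def psi43 : Equiv.Perm Tuple where
  toFun x := { x with f1 := x.f1 + x.c5, f2 := x.f2 - x.c4, t1 := x.t1 + x.f3 }
  invFun x := { x with f1 := x.f1 - x.c5, f2 := x.f2 + x.c4, t1 := x.t1 - x.f3 }
  left_inv x := by cases x; simp
  right_inv x := by cases x; simp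

/-- The move ψ₂₃ : f₁↦f₁−c₅, f₄↦f₄+c₃, t₂↦t₂−f₃. -/
def psi23 : Equiv.Perm Tuple where
  toFun x := { x with f1 := x.f1 - x.c5, f4 := x.f4 + x.c3, t2 := x.t2 - x.f3 }
  invFun x := { x with f1 := x.f1 + x.c5, f4 := x.f4 - x.c3, t2 := x.t2 + x.f3 }
  left_inv x := by cases x; simp
  right_inv x := by cases x; simp

/-- The move ψ₃₄ : f₁↦f₁−c₁, f₂↦f₂+c₂, t₁↦t₁+f₄. -/
def psi34 : Equiv.Perm Tuple where
  toFun x := { x with f1 := x.f1 - x.c1, f2 := x.f2 + x.c2, t1 := x.t1 + x.f4 }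
  invFun x := { x with f1 := x.f1 + x.c1, f2 := x.f2 - x.c2, t1 := x.t1 - x.f4 }
  left_inv x := by cases x; simp
  right_inv x := by cases x; simp

/-- The move ψ₁₄ : f₂↦f₂−c₂, f₃↦f₃+c₃, t₂↦t₂−f₄. -/
def psi14 : Equiv.Perm Tuple where
  toFun x := { x with f2 := x.f2 - x.c2, f3 := x.f3 + x.c3, t2 := x.t2 - x.f4 }
  invFun x := { x with f2 := x.f2 + x.c2, f3 := x.f3 - x.c3, t2 := x.t2 + x.f4 }
  left_inv x := by cases x; simp
  right_inv x := by cases x; simp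

/-- The list of the eight ψ-moves. -/
def psiMoves : List (Equiv.Perm Tuple) :=
  [psi21, psi41, psi12, psi32, psi43, psi23, psi34, psi14]

/-- Two tuples are ψ-equivalent if one is obtained from the other by a finite
composition of the eight ψ-moves and their inverses, i.e. they are related by the
equivalence relation generated by single applications of the moves. -/
def PsiEquiv : Tuple → Tuple → Prop :=
  Relation.EqvGen (fun x y => ∃ g ∈ psiMoves, g x = y)

/-!
The moves fix the coefficients, and on the slice c₂ = c₅ = c₆ = 0 they preserve f₁ mod c₁,
f₂ mod c₄, J₁ = c₁c₄t₁ + c₄f₁f₄ + c₁f₂f₃ mod c₃, and J₂ = c₃t₂ + f₃f₄ modulo every common divisor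
of c₁, c₄, f₁, f₂ (as gcd(c₁, c₃) = 1, these are the common divisors of c₁, c₄, c₃f₁, c₃f₂).

Conversely, powers of ψ₃₄ and ψ₄₃ move f₁, f₂ by multiples of c₁, c₄, and since c₃ is coprime
to c₁ and c₄, Bézout combinations of ψ₁₄, ψ₁₂ and of ψ₂₃, ψ₂₁ move f₃, f₄ arbitrarily. Once the
f's agree, the invariants say exactly that c₃ ∣ t₁ - t₁' and gcd(c₁, c₄, f₁, f₂) ∣ t₂ - t₂', and
these shifts are realised: t₁ by c₃ through the commutator of ψ₄₃ and ψ₁₄, t₂ by f₁ and f₂ through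
ψ₄₁ and ψ₃₂, and by c₁ and c₄ through the commutators of ψ₃₄ with ψ₄₁ and of ψ₄₃ with ψ₃₂.
-/

theorem Relation.EqvGen.rel_of_mem_of_invariant {α : Type*} {r s : α → α → Prop} {S : Set α}
    (hs : Equivalence s) (hS : ∀ a b, r a b → (a ∈ S ↔ b ∈ S))
    (hrs : ∀ a b, r a b → a ∈ S → s a b) {x y : α} (h : Relation.EqvGen r x y) (hx : x ∈ S) :
    s x y := by
  have key : (x ∈ S ↔ y ∈ S) ∧ (x ∈ S → s x y) := by
    clear hx
    induction h with
    | rel a b hab => exact ⟨hS a b hab, hrs a b hab⟩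
    | refl a => exact ⟨Iff.rfl, fun _ => hs.refl a⟩
    | symm a b _ ih => exact ⟨ih.1.symm, fun hb => hs.symm (ih.2 (ih.1.2 hb))⟩
    | trans a b c _ _ ih₁ ih₂ =>
      exact ⟨ih₁.1.trans ih₂.1, fun ha => hs.trans (ih₁.2 ha) (ih₂.2 (ih₁.1.1 ha))⟩
  exact key.2 hx

namespace Int

variable {a b c d : ℤ}

theorem coe_gcd_gcd_gcd_dvd (a b c d : ℤ) :
    (gcd a (gcd b (gcd c d)) : ℤ) ∣ a ∧ (gcd a (gcd b (gcd c d)) : ℤ) ∣ b ∧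
      (gcd a (gcd b (gcd c d)) : ℤ) ∣ c ∧ (gcd a (gcd b (gcd c d)) : ℤ) ∣ d :=
  have hbcd := gcd_dvd_right a (gcd b (gcd c d))
  have hcd := gcd_dvd_right b (gcd c d)
  ⟨gcd_dvd_left _ _, hbcd.trans (gcd_dvd_left _ _), hbcd.trans (hcd.trans (gcd_dvd_left _ _)),
    hbcd.trans (hcd.trans (gcd_dvd_right _ _))⟩

theorem coe_gcd_gcd_gcd_dvd_iff {s : ℤ} :
    (gcd a (gcd b (gcd c d)) : ℤ) ∣ s ↔ ∀ e, e ∣ a → e ∣ b → e ∣ c → e ∣ d → e ∣ s := by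
  refine ⟨fun h e ha hb hc hd => (dvd_coe_gcd ha (dvd_coe_gcd hb (dvd_coe_gcd hc hd))).trans h,
    fun h => ?_⟩
  obtain ⟨ha, hb, hc, hd⟩ := coe_gcd_gcd_gcd_dvd a b c d
  exact h _ ha hb hc hd

theorem exists_eq_of_coe_gcd_gcd_gcd_dvd {s : ℤ} (h : (gcd a (gcd b (gcd c d)) : ℤ) ∣ s) :
    ∃ x y z w : ℤ, s = a * x + b * y + c * z + d * w := by
  obtain ⟨k, rfl⟩ := h
  rw [gcd_eq_gcd_ab a, gcd_eq_gcd_ab b, gcd_eq_gcd_ab c d]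
  exact ⟨gcdA a _ * k, gcdB a _ * gcdA b _ * k, gcdB a _ * gcdB b _ * gcdA c d * k,
    gcdB a _ * gcdB b _ * gcdB c d * k, by ring⟩

theorem gcd_gcd_gcd_mul_of_isCoprime {k : ℤ} (hak : IsCoprime a k) :
    gcd a (gcd b (gcd (k * c) (k * d))) = gcd a (gcd b (gcd c d)) := by
  refine Nat.dvd_antisymm (natCast_dvd_natCast.1 ?_) (natCast_dvd_natCast.1 ?_)
  · obtain ⟨ha, hb, hc, hd⟩ := coe_gcd_gcd_gcd_dvd a b (k * c) (k * d)
    have hk := hak.of_isCoprime_of_dvd_left ha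
    exact dvd_coe_gcd ha (dvd_coe_gcd hb
      (dvd_coe_gcd (hk.dvd_of_dvd_mul_left hc) (hk.dvd_of_dvd_mul_left hd)))
  · obtain ⟨ha, hb, hc, hd⟩ := coe_gcd_gcd_gcd_dvd a b c d
    exact dvd_coe_gcd ha (dvd_coe_gcd hb (dvd_coe_gcd (hc.mul_left k) (hd.mul_left k)))

end Int

theorem PsiEquiv.symm {x y : Tuple} (h : PsiEquiv x y) : PsiEquiv y x :=
  Relation.EqvGen.symm _ _ h

theorem PsiEquiv.trans {x y z : Tuple} (h : PsiEquiv x y) (h' : PsiEquiv y z) : PsiEquiv x z :=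
  Relation.EqvGen.trans _ _ _ h h'

theorem PsiEquiv.of_iterate {g : Equiv.Perm Tuple} {x : Tuple} {F : ℤ → Tuple}
    (hg : g ∈ psiMoves) (hF : ∀ n, g (F n) = F (n + 1)) (h0 : F 0 = x) :
    ∀ n, PsiEquiv x (F n) := by
  subst h0
  intro n
  induction n using Int.induction_on with
  | zero => exact Relation.EqvGen.refl _
  | succ k ih => exact ih.trans (Relation.EqvGen.rel _ _ ⟨g, hg, hF k⟩)
  | pred k ih =>
    refine ih.trans (Relation.EqvGen.rel _ _ ⟨g, hg, ?_⟩).symm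
    rw [hF, sub_add_cancel]

section
variable {c1 c3 c4 f1 f2 f3 f4 t1 t2 : ℤ}

theorem psiEquiv_psi21_iterate (n : ℤ) :
    PsiEquiv ⟨c1, 0, c3, c4, 0, 0, f1, f2, f3, f4, t1, t2⟩
      ⟨c1, 0, c3, c4, 0, 0, f1, f2, f3, f4 - n * c1, t1 + n * f1, t2⟩ := by
  revert n
  exact PsiEquiv.of_iterate (g := psi21) (by simp [psiMoves])
    (fun n => by simp [psi21, add_mul, add_assoc, sub_sub]) (by simp)

theorem psiEquiv_psi41_iterate (n : ℤ) :
    PsiEquiv ⟨c1, 0, c3, c4, 0, 0, f1, f2, f3, f4, t1, t2⟩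
      ⟨c1, 0, c3, c4, 0, 0, f1, f2, f3, f4, t1, t2 - n * f1⟩ := by
  revert n
  exact PsiEquiv.of_iterate (g := psi41) (by simp [psiMoves])
    (fun n => by simp [psi41, add_mul, sub_sub]) (by simp)

theorem psiEquiv_psi12_iterate (n : ℤ) :
    PsiEquiv ⟨c1, 0, c3, c4, 0, 0, f1, f2, f3, f4, t1, t2⟩
      ⟨c1, 0, c3, c4, 0, 0, f1, f2, f3 - n * c4, f4, t1 + n * f2, t2⟩ := by
  revert n
  exact PsiEquiv.of_iterate (g := psi12) (by simp [psiMoves])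
    (fun n => by simp [psi12, add_mul, add_assoc, sub_sub]) (by simp)

theorem psiEquiv_psi32_iterate (n : ℤ) :
    PsiEquiv ⟨c1, 0, c3, c4, 0, 0, f1, f2, f3, f4, t1, t2⟩
      ⟨c1, 0, c3, c4, 0, 0, f1, f2, f3, f4, t1, t2 - n * f2⟩ := by
  revert n
  exact PsiEquiv.of_iterate (g := psi32) (by simp [psiMoves])
    (fun n => by simp [psi32, add_mul, sub_sub]) (by simp)

theorem psiEquiv_psi43_iterate (n : ℤ) :
    PsiEquiv ⟨c1, 0, c3, c4, 0, 0, f1, f2, f3, f4, t1, t2⟩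
      ⟨c1, 0, c3, c4, 0, 0, f1, f2 - n * c4, f3, f4, t1 + n * f3, t2⟩ := by
  revert n
  exact PsiEquiv.of_iterate (g := psi43) (by simp [psiMoves])
    (fun n => by simp [psi43, add_mul, add_assoc, sub_sub]) (by simp)

theorem psiEquiv_psi23_iterate (n : ℤ) :
    PsiEquiv ⟨c1, 0, c3, c4, 0, 0, f1, f2, f3, f4, t1, t2⟩
      ⟨c1, 0, c3, c4, 0, 0, f1, f2, f3, f4 + n * c3, t1, t2 - n * f3⟩ := by
  revert n
  exact PsiEquiv.of_iterate (g := psi23) (by simp [psiMoves])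
    (fun n => by simp [psi23, add_mul, add_assoc, sub_sub]) (by simp)

theorem psiEquiv_psi34_iterate (n : ℤ) :
    PsiEquiv ⟨c1, 0, c3, c4, 0, 0, f1, f2, f3, f4, t1, t2⟩
      ⟨c1, 0, c3, c4, 0, 0, f1 - n * c1, f2, f3, f4, t1 + n * f4, t2⟩ := by
  revert n
  exact PsiEquiv.of_iterate (g := psi34) (by simp [psiMoves])
    (fun n => by simp [psi34, add_mul, add_assoc, sub_sub]) (by simp)

theorem psiEquiv_psi14_iterate (n : ℤ) :
    PsiEquiv ⟨c1, 0, c3, c4, 0, 0, f1, f2, f3, f4, t1, t2⟩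
      ⟨c1, 0, c3, c4, 0, 0, f1, f2, f3 + n * c3, f4, t1, t2 - n * f4⟩ := by
  revert n
  exact PsiEquiv.of_iterate (g := psi14) (by simp [psiMoves])
    (fun n => by simp [psi14, add_mul, add_assoc, sub_sub]) (by simp)

theorem psiEquiv_add_mul_c3_t1 (n : ℤ) :
    PsiEquiv ⟨c1, 0, c3, c4, 0, 0, f1, f2, f3, f4, t1, t2⟩
      ⟨c1, 0, c3, c4, 0, 0, f1, f2, f3, f4, t1 + n * c3, t2⟩ := by
  convert ((psiEquiv_psi43_iterate (-n)).trans (psiEquiv_psi14_iterate 1)).trans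
    ((psiEquiv_psi43_iterate n).trans (psiEquiv_psi14_iterate (-1))) using 2 <;> ring

theorem psiEquiv_add_mul_c1_t2 (n : ℤ) :
    PsiEquiv ⟨c1, 0, c3, c4, 0, 0, f1, f2, f3, f4, t1, t2⟩
      ⟨c1, 0, c3, c4, 0, 0, f1, f2, f3, f4, t1, t2 + n * c1⟩ := by
  convert ((psiEquiv_psi34_iterate n).trans (psiEquiv_psi41_iterate 1)).trans
    ((psiEquiv_psi34_iterate (-n)).trans (psiEquiv_psi41_iterate (-1))) using 2 <;> ring

theorem psiEquiv_add_mul_c4_t2 (n : ℤ) :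
    PsiEquiv ⟨c1, 0, c3, c4, 0, 0, f1, f2, f3, f4, t1, t2⟩
      ⟨c1, 0, c3, c4, 0, 0, f1, f2, f3, f4, t1, t2 + n * c4⟩ := by
  convert ((psiEquiv_psi43_iterate n).trans (psiEquiv_psi32_iterate 1)).trans
    ((psiEquiv_psi43_iterate (-n)).trans (psiEquiv_psi32_iterate (-1))) using 2 <;> ring

theorem psiEquiv_of_dvd_sub_t {t1' t2' : ℤ} (h1 : c3 ∣ t1 - t1')
    (h2 : (Int.gcd c1 (Int.gcd c4 (Int.gcd f1 f2)) : ℤ) ∣ t2 - t2') :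
    PsiEquiv ⟨c1, 0, c3, c4, 0, 0, f1, f2, f3, f4, t1, t2⟩
      ⟨c1, 0, c3, c4, 0, 0, f1, f2, f3, f4, t1', t2'⟩ := by
  obtain ⟨m, hm⟩ := h1
  obtain ⟨x, y, z, w, hxyzw⟩ := Int.exists_eq_of_coe_gcd_gcd_gcd_dvd h2
  convert (psiEquiv_add_mul_c3_t1 (-m)).trans ((psiEquiv_add_mul_c1_t2 (-x)).trans
    ((psiEquiv_add_mul_c4_t2 (-y)).trans
      ((psiEquiv_psi41_iterate z).trans (psiEquiv_psi32_iterate w)))) using 2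
  · linear_combination -hm
  · linear_combination -hxyzw

theorem exists_psiEquiv_of_dvd_sub_f {f1' f2' f3' f4' : ℤ} (h13 : IsCoprime c1 c3)
    (h34 : IsCoprime c3 c4) (h1 : c1 ∣ f1 - f1') (h2 : c4 ∣ f2 - f2') :
    ∃ s1 s2 : ℤ, PsiEquiv ⟨c1, 0, c3, c4, 0, 0, f1, f2, f3, f4, t1, t2⟩
      ⟨c1, 0, c3, c4, 0, 0, f1', f2', f3', f4', s1, s2⟩ := by
  obtain ⟨a, rfl⟩ : ∃ a, f1' = f1 - a * c1 := let ⟨a, ha⟩ := h1; ⟨a, by linear_combination -ha⟩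
  obtain ⟨b, rfl⟩ : ∃ b, f2' = f2 - b * c4 := let ⟨b, hb⟩ := h2; ⟨b, by linear_combination -hb⟩
  obtain ⟨u, v, rfl⟩ : ∃ u v, f3' = f3 + u * c3 - v * c4 :=
    let ⟨u, v, huv⟩ := h34
    ⟨(f3' - f3) * u, -(f3' - f3) * v, by linear_combination (f3 - f3') * huv⟩
  obtain ⟨p, q, rfl⟩ : ∃ p q, f4' = f4 + p * c3 - q * c1 :=
    let ⟨q, p, hqp⟩ := h13
    ⟨(f4' - f4) * p, -(f4' - f4) * q, by linear_combination (f4 - f4') * hqp⟩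
  exact ⟨_, _, (psiEquiv_psi34_iterate a).trans ((psiEquiv_psi43_iterate b).trans
    ((psiEquiv_psi14_iterate u).trans ((psiEquiv_psi12_iterate v).trans
      ((psiEquiv_psi23_iterate p).trans (psiEquiv_psi21_iterate q)))))⟩

end

/-- The third condition is congruence modulo gcd(c₁, c₄, f₁, f₂), phrased through all common
divisors so that transitivity needs no gcd computation. -/
def SameInvariants (c1 c3 c4 : ℤ) (x y : Tuple) : Prop :=
  c1 ∣ x.f1 - y.f1 ∧ c4 ∣ x.f2 - y.f2 ∧
    (∀ e, e ∣ c1 → e ∣ c4 → e ∣ x.f1 → e ∣ x.f2 →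
      e ∣ (c3 * x.t2 + x.f3 * x.f4) - (c3 * y.t2 + y.f3 * y.f4)) ∧
    c3 ∣ (c1 * c4 * x.t1 + c4 * x.f1 * x.f4 + c1 * x.f2 * x.f3) -
      (c1 * c4 * y.t1 + c4 * y.f1 * y.f4 + c1 * y.f2 * y.f3)

namespace SameInvariants

variable {c1 c3 c4 : ℤ} {x y z : Tuple}

theorem refl (x : Tuple) : SameInvariants c1 c3 c4 x x := by
  simp [SameInvariants]

theorem symm (h : SameInvariants c1 c3 c4 x y) : SameInvariants c1 c3 c4 y x := by
  obtain ⟨h1, h2, hJ2, hJ1⟩ := h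
  refine ⟨dvd_sub_comm.1 h1, dvd_sub_comm.1 h2, fun e he1 he4 hf1 hf2 => ?_, dvd_sub_comm.1 hJ1⟩
  exact dvd_sub_comm.1 (hJ2 e he1 he4 ((dvd_sub_left hf1).1 (he1.trans h1))
    ((dvd_sub_left hf2).1 (he4.trans h2)))

theorem trans (h : SameInvariants c1 c3 c4 x y) (h' : SameInvariants c1 c3 c4 y z) :
    SameInvariants c1 c3 c4 x z := by
  obtain ⟨h1, h2, hJ2, hJ1⟩ := h
  obtain ⟨h1', h2', hJ2', hJ1'⟩ := h'
  refine ⟨by simpa using dvd_add h1 h1', by simpa using dvd_add h2 h2',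
    fun e he1 he4 hf1 hf2 => ?_, by simpa using dvd_add hJ1 hJ1'⟩
  simpa using dvd_add (hJ2 e he1 he4 hf1 hf2)
    (hJ2' e he1 he4 ((dvd_sub_right hf1).1 (he1.trans h1)) ((dvd_sub_right hf2).1 (he4.trans h2)))

theorem equivalence : Equivalence (SameInvariants c1 c3 c4) :=
  ⟨refl, symm, trans⟩

end SameInvariants

section
variable {c1 c3 c4 f1 f2 f3 f4 t1 t2 : ℤ}

theorem sameInvariants_apply_of_mem {g : Equiv.Perm Tuple} (hg : g ∈ psiMoves) :
    SameInvariants c1 c3 c4 ⟨c1, 0, c3, c4, 0, 0, f1, f2, f3, f4, t1, t2⟩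
      (g ⟨c1, 0, c3, c4, 0, 0, f1, f2, f3, f4, t1, t2⟩) := by
  simp only [psiMoves, List.mem_cons, List.not_mem_nil, or_false] at hg
  rcases hg with rfl | rfl | rfl | rfl | rfl | rfl | rfl | rfl
  all_goals simp only [SameInvariants, psi21, psi41, psi12, psi32, psi43, psi23, psi34, psi14,
    Equiv.coe_fn_mk, add_zero, sub_zero, sub_self, sub_sub_cancel, add_sub_add_left_eq_sub,
    add_sub_add_right_eq_sub, dvd_zero, dvd_refl, implies_true, true_and, and_true]
  · exact ⟨fun e ⟨k, hk⟩ _ _ _ => ⟨f3 * k, by rw [hk]; ring⟩, ⟨0, by ring⟩⟩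
  · exact fun e _ _ ⟨k, hk⟩ _ => ⟨c3 * k, by rw [hk]; ring⟩
  · exact ⟨fun e _ ⟨k, hk⟩ _ _ => ⟨k * f4, by rw [hk]; ring⟩, ⟨0, by ring⟩⟩
  · exact fun e _ _ _ ⟨k, hk⟩ => ⟨c3 * k, by rw [hk]; ring⟩
  · exact ⟨0, by ring⟩
  · exact ⟨fun _ _ _ _ _ => ⟨0, by ring⟩, ⟨-(c4 * f1), by ring⟩⟩
  · exact ⟨0, by ring⟩
  · exact ⟨fun _ _ _ _ _ => ⟨0, by ring⟩, ⟨-(c1 * f2), by ring⟩⟩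

theorem sameInvariants_of_psiEquiv {y : Tuple}
    (h : PsiEquiv ⟨c1, 0, c3, c4, 0, 0, f1, f2, f3, f4, t1, t2⟩ y) :
    SameInvariants c1 c3 c4 ⟨c1, 0, c3, c4, 0, 0, f1, f2, f3, f4, t1, t2⟩ y := by
  refine h.rel_of_mem_of_invariant (S := {x | x.c1 = c1 ∧ x.c2 = 0 ∧ x.c3 = c3 ∧ x.c4 = c4 ∧
    x.c5 = 0 ∧ x.c6 = 0}) SameInvariants.equivalence ?_ ?_ ⟨rfl, rfl, rfl, rfl, rfl, rfl⟩
  · rintro a _ ⟨g, hg, rfl⟩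
    simp only [psiMoves, List.mem_cons, List.not_mem_nil, or_false] at hg
    rcases hg with rfl | rfl | rfl | rfl | rfl | rfl | rfl | rfl <;> exact Iff.rfl
  · rintro ⟨_, _, _, _, _, _, _, _, _, _, _, _⟩ _ ⟨g, hg, rfl⟩ ⟨rfl, rfl, rfl, rfl, rfl, rfl⟩
    exact sameInvariants_apply_of_mem hg

theorem psiEquiv_of_sameInvariants {s1 s2 : ℤ} (h13 : IsCoprime c1 c3) (h34 : IsCoprime c3 c4)
    (h : SameInvariants c1 c3 c4 ⟨c1, 0, c3, c4, 0, 0, f1, f2, f3, f4, t1, t2⟩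
      ⟨c1, 0, c3, c4, 0, 0, f1, f2, f3, f4, s1, s2⟩) :
    PsiEquiv ⟨c1, 0, c3, c4, 0, 0, f1, f2, f3, f4, t1, t2⟩
      ⟨c1, 0, c3, c4, 0, 0, f1, f2, f3, f4, s1, s2⟩ := by
  obtain ⟨-, -, hJ2, hJ1⟩ := h
  refine psiEquiv_of_dvd_sub_t ?_ ?_
  · refine (h13.symm.mul_right h34).dvd_of_dvd_mul_left (hJ1.trans (dvd_of_eq ?_))
    ring
  · obtain ⟨hd1, hd4, hf1, hf2⟩ := Int.coe_gcd_gcd_gcd_dvd c1 c4 f1 f2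
    refine (h13.of_isCoprime_of_dvd_left hd1).dvd_of_dvd_mul_left
      ((hJ2 _ hd1 hd4 hf1 hf2).trans (dvd_of_eq ?_))
    ring

theorem psiEquiv_iff_sameInvariants {f1' f2' f3' f4' t1' t2' : ℤ} (h13 : IsCoprime c1 c3)
    (h34 : IsCoprime c3 c4) :
    PsiEquiv ⟨c1, 0, c3, c4, 0, 0, f1, f2, f3, f4, t1, t2⟩
        ⟨c1, 0, c3, c4, 0, 0, f1', f2', f3', f4', t1', t2'⟩ ↔
      SameInvariants c1 c3 c4 ⟨c1, 0, c3, c4, 0, 0, f1, f2, f3, f4, t1, t2⟩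
        ⟨c1, 0, c3, c4, 0, 0, f1', f2', f3', f4', t1', t2'⟩ := by
  refine ⟨sameInvariants_of_psiEquiv, fun h => ?_⟩
  obtain ⟨h1, h2, -, -⟩ := h.symm
  obtain ⟨s1, s2, h'⟩ : ∃ s1 s2, PsiEquiv ⟨c1, 0, c3, c4, 0, 0, f1', f2', f3', f4', t1', t2'⟩
      ⟨c1, 0, c3, c4, 0, 0, f1, f2, f3, f4, s1, s2⟩ :=
    exists_psiEquiv_of_dvd_sub_f h13 h34 h1 h2
  exact (psiEquiv_of_sameInvariants h13 h34 (h.trans (sameInvariants_of_psiEquiv h'))).trans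
    h'.symm

end

theorem classification_case3_general (c1 c3 c4 f1 f2 f3 f4 t1 t2 f1' f2' f3' f4' t1' t2' : ℤ)
    (h13 : Int.gcd c1 c3 = 1) (h34 : Int.gcd c3 c4 = 1) :
    PsiEquiv ⟨c1, 0, c3, c4, 0, 0, f1, f2, f3, f4, t1, t2⟩
        ⟨c1, 0, c3, c4, 0, 0, f1', f2', f3', f4', t1', t2'⟩ ↔
      (c1 ∣ f1 - f1' ∧
        c4 ∣ f2 - f2' ∧
        (Int.gcd c1 (Int.gcd c4 (Int.gcd (c3 * f1) (c3 * f2))) : ℤ) ∣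
          (c3 * t2 + f3 * f4) - (c3 * t2' + f3' * f4') ∧
        c3 ∣ (c1 * c4 * t1 + c4 * f1 * f4 + c1 * f2 * f3) -
          (c1 * c4 * t1' + c4 * f1' * f4' + c1 * f2' * f3')) := by
  have hc13 := Int.isCoprime_iff_gcd_eq_one.2 h13
  rw [psiEquiv_iff_sameInvariants hc13 (Int.isCoprime_iff_gcd_eq_one.2 h34),
    Int.gcd_gcd_gcd_mul_of_isCoprime hc13, Int.coe_gcd_gcd_gcd_dvd_iff]
  rfl

/-- Classification when c₂ = c₅ = c₆ = 0, c₁, c₃, c₄ ≠ 0, gcd(c₁,c₃) = gcd(c₃,c₄) = 1: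
two such tuples are ψ-equivalent iff f₁ ≡ f₁′ (mod c₁), f₂ ≡ f₂′ (mod c₄),
c₃t₂+f₃f₄ ≡ c₃t₂′+f₃′f₄′ (mod gcd(c₁,c₄,c₃f₁,c₃f₂)) and
c₁c₄t₁+c₄f₁f₄+c₁f₂f₃ ≡ c₁c₄t₁′+c₄f₁′f₄′+c₁f₂′f₃′ (mod c₃). -/
theorem classification_case3 (c1 c3 c4 f1 f2 f3 f4 t1 t2 f1' f2' f3' f4' t1' t2' : ℤ)
    (hc1 : c1 ≠ 0) (hc3 : c3 ≠ 0) (hc4 : c4 ≠ 0)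
    (h13 : Int.gcd c1 c3 = 1) (h34 : Int.gcd c3 c4 = 1) :
    PsiEquiv ⟨c1, 0, c3, c4, 0, 0, f1, f2, f3, f4, t1, t2⟩
        ⟨c1, 0, c3, c4, 0, 0, f1', f2', f3', f4', t1', t2'⟩ ↔
      (c1 ∣ f1 - f1' ∧
        c4 ∣ f2 - f2' ∧
        (Int.gcd c1 (Int.gcd c4 (Int.gcd (c3 * f1) (c3 * f2))) : ℤ) ∣
          (c3 * t2 + f3 * f4) - (c3 * t2' + f3' * f4') ∧
        c3 ∣ (c1 * c4 * t1 + c4 * f1 * f4 + c1 * f2 * f3) -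
          (c1 * c4 * t1' + c4 * f1' * f4' + c1 * f2' * f3')) :=
  classification_case3_general c1 c3 c4 f1 f2 f3 f4 t1 t2 f1' f2' f3' f4' t1' t2' h13 h34
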